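/- Let α > 0. Then there exists C = C(α) > 0 such that ||z₁|^α z₁ − |z₂|^α z₂| ≤ C ||z₁|^{α+1} z₁ − |z₂|^{α+1} z₂|^{(α+1)/(α+2)} for all z₁, z₂ ∈ ℂ. -/

import Mathlib

open Real Complex

/-- Tangent-line inequality: for `0 ≤ y ≤ x` and `0 < β`,
`(x^β - y^β) * y ≤ β * x^β * (x - y)`. -/
lemma tangent_aux {β x y : ℝ} (hβ : 0 < β) (hy : 0 ≤ y) (hxy : y ≤ x) :
    (x ^ β - y ^ β) * y ≤ β * x ^ β * (x - y) := by
  have hx : 0 ≤ x := hy.trans hxy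
  have hyx : y ^ β ≤ x ^ β := Real.rpow_le_rpow hy hxy hβ.le
  rcases le_or_gt 1 β with hβ1 | hβ1
  · -- case β ≥ 1 : Bernoulli at x
    rcases eq_or_lt_of_le hx with hx0 | hx0
    · have : x = 0 := hx0.symm
      have : y = 0 := le_antisymm (this ▸ hxy) hy
      subst this
      simp
      positivity
    · have hs : -1 ≤ y / x - 1 := by
        have : 0 ≤ y / x := div_nonneg hy hx0.le
        linarith
      have hB := one_add_mul_self_le_rpow_one_add hs hβ1
      have h1 : (1 : ℝ) + (y / x - 1) = y / x := by ring
      rw [h1, Real.div_rpow hy hx0.le] at hB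
      have hxβ : (0:ℝ) < x ^ β := Real.rpow_pos_of_pos hx0 _
      have hB' := mul_le_mul_of_nonneg_left hB hxβ.le
      rw [mul_div_cancel₀ _ hxβ.ne'] at hB'
      -- hB' : x^β * (1 + β * (y/x - 1)) ≤ y^β
      have hxne : x ≠ 0 := hx0.ne'
      have hB'' : x * x ^ β + β * x ^ β * y - β * x ^ β * x ≤ y ^ β * x := by
        have := mul_le_mul_of_nonneg_right hB' hx0.le
        field_simp at this ⊢
        nlinarith [this]
      nlinarith [mul_nonneg (sub_nonneg.2 hyx) (sub_nonneg.2 hxy)]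
  · -- case β < 1 : reverse Bernoulli at y
    rcases eq_or_lt_of_le hy with hy0 | hy0
    · rw [← hy0]
      simp
      positivity
    · have hs : -1 ≤ x / y - 1 := by
        have : 0 ≤ x / y := div_nonneg hx hy0.le
        linarith
      have hB := rpow_one_add_le_one_add_mul_self hs hβ.le hβ1.le
      have h1 : (1 : ℝ) + (x / y - 1) = x / y := by ring
      rw [h1, Real.div_rpow hx hy0.le] at hB
      have hyβ : (0:ℝ) < y ^ β := Real.rpow_pos_of_pos hy0 _
      have hB' := mul_le_mul_of_nonneg_left hB hyβ.le
      rw [mul_div_cancel₀ _ hyβ.ne'] at hB'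
      -- hB' : x^β ≤ y^β * (1 + β * (x/y - 1))
      have hyne : y ≠ 0 := hy0.ne'
      have hB'' : x ^ β * y ≤ y * y ^ β + β * y ^ β * x - β * y ^ β * y := by
        have := mul_le_mul_of_nonneg_right hB' hy0.le
        field_simp at this ⊢
        nlinarith [this]
      nlinarith [mul_nonneg (sub_nonneg.2 hyx) (sub_nonneg.2 hxy)]

/-- Upper Lipschitz bound. -/
lemma upper_aux {β : ℝ} (hβ : 0 < β) (z₁ z₂ : ℂ) (h : ‖z₂‖ ≤ ‖z₁‖) :
    ‖((‖z₁‖ ^ β : ℝ) : ℂ) * z₁ - ((‖z₂‖ ^ β : ℝ) : ℂ) * z₂‖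
      ≤ (1 + β) * ‖z₁‖ ^ β * ‖z₁ - z₂‖ := by
  set a := ‖z₁‖ with ha
  set b := ‖z₂‖ with hb
  have ha0 : 0 ≤ a := norm_nonneg _
  have hb0 : 0 ≤ b := norm_nonneg _
  have heq : ((a ^ β : ℝ) : ℂ) * z₁ - ((b ^ β : ℝ) : ℂ) * z₂
      = ((a ^ β : ℝ) : ℂ) * (z₁ - z₂) + (((a ^ β : ℝ) : ℂ) - ((b ^ β : ℝ) : ℂ)) * z₂ := by
    ring
  rw [heq]
  have h1 : ‖((a ^ β : ℝ) : ℂ) * (z₁ - z₂)‖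
      = a ^ β * ‖z₁ - z₂‖ := by
    rw [norm_mul, Complex.norm_real, Real.norm_eq_abs, _root_.abs_of_nonneg (Real.rpow_nonneg ha0 β)]
  have h2 : ‖(((a ^ β : ℝ) : ℂ) - ((b ^ β : ℝ) : ℂ)) * z₂‖
      = (a ^ β - b ^ β) * b := by
    rw [norm_mul, ← Complex.ofReal_sub, Complex.norm_real, Real.norm_eq_abs,
      _root_.abs_of_nonneg (sub_nonneg.2 (Real.rpow_le_rpow hb0 h hβ.le))]
  calc ‖((a ^ β : ℝ) : ℂ) * (z₁ - z₂) + (((a ^ β : ℝ) : ℂ) - ((b ^ β : ℝ) : ℂ)) * z₂‖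
      ≤ ‖((a ^ β : ℝ) : ℂ) * (z₁ - z₂)‖
        + ‖(((a ^ β : ℝ) : ℂ) - ((b ^ β : ℝ) : ℂ)) * z₂‖ := norm_add_le _ _
    _ = a ^ β * ‖z₁ - z₂‖ + (a ^ β - b ^ β) * b := by rw [h1, h2]
    _ ≤ a ^ β * ‖z₁ - z₂‖ + β * a ^ β * (a - b) :=
        add_le_add_right (tangent_aux hβ hb0 h) _
    _ ≤ a ^ β * ‖z₁ - z₂‖ + β * a ^ β * ‖z₁ - z₂‖ := by
        have h3 : a - b ≤ ‖z₁ - z₂‖ := by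
          have h5 := abs_norm_sub_norm_le z₁ z₂
          have h6 := abs_le.1 h5
          linarith [h6.2]
        have h4 : 0 ≤ β * a ^ β := by positivity
        nlinarith [Real.rpow_nonneg ha0 β]
    _ = (1 + β) * a ^ β * ‖z₁ - z₂‖ := by ring

/-- Lower bound via the real part of the inner product. -/
lemma lower_aux {β : ℝ} (hβ : 0 < β) (z₁ z₂ : ℂ) (h : ‖z₂‖ ≤ ‖z₁‖)
    (hne : z₁ ≠ z₂) :
    (1 / 2) * ‖z₁‖ ^ β * ‖z₁ - z₂‖
      ≤ ‖((‖z₁‖ ^ β : ℝ) : ℂ) * z₁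
          - ((‖z₂‖ ^ β : ℝ) : ℂ) * z₂‖ := by
  set a := ‖z₁‖ with ha
  set b := ‖z₂‖ with hb
  have ha0 : 0 ≤ a := norm_nonneg _
  have hb0 : 0 ≤ b := norm_nonneg _
  have hd : 0 < ‖z₁ - z₂‖ := by
    rw [norm_pos_iff]
    exact sub_ne_zero.2 hne
  set d := ‖z₁ - z₂‖ with hdd
  set t := (z₁ * (starRingEnd ℂ) z₂).re with htdef
  have ht : t ≤ a * b := by
    calc t ≤ ‖z₁ * (starRingEnd ℂ) z₂‖ := Complex.re_le_norm _
      _ = a * b := by rw [norm_mul, Complex.norm_conj]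
  have hd2 : d ^ 2 = a ^ 2 + b ^ 2 - 2 * t := by
    rw [hdd, Complex.sq_norm, Complex.normSq_sub, ← Complex.sq_norm, ← Complex.sq_norm]
  -- real part computation
  have hre : ((((a ^ β : ℝ) : ℂ) * z₁ - ((b ^ β : ℝ) : ℂ) * z₂)
        * (starRingEnd ℂ) (z₁ - z₂)).re
      = a ^ β * a ^ 2 + b ^ β * b ^ 2 - (a ^ β + b ^ β) * t := by
    have e1 : (z₁ * (starRingEnd ℂ) z₁).re = a ^ 2 := by
      rw [Complex.mul_conj, Complex.ofReal_re]; exact (Complex.sq_norm z₁).symm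
    have e2 : (z₂ * (starRingEnd ℂ) z₂).re = b ^ 2 := by
      rw [Complex.mul_conj, Complex.ofReal_re]; exact (Complex.sq_norm z₂).symm
    have e3 : (z₂ * (starRingEnd ℂ) z₁).re = t := by
      rw [htdef]
      have : z₂ * (starRingEnd ℂ) z₁ = (starRingEnd ℂ) (z₁ * (starRingEnd ℂ) z₂) := by
        rw [map_mul, Complex.conj_conj]; ring
      rw [this, Complex.conj_re]
    have expand : (((a ^ β : ℝ) : ℂ) * z₁ - ((b ^ β : ℝ) : ℂ) * z₂)
          * (starRingEnd ℂ) (z₁ - z₂)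
        = ((a ^ β : ℝ) : ℂ) * (z₁ * (starRingEnd ℂ) z₁)
          - ((a ^ β : ℝ) : ℂ) * (z₁ * (starRingEnd ℂ) z₂)
          - ((b ^ β : ℝ) : ℂ) * (z₂ * (starRingEnd ℂ) z₁)
          + ((b ^ β : ℝ) : ℂ) * (z₂ * (starRingEnd ℂ) z₂) := by
      rw [map_sub]; ring
    rw [expand]
    simp only [Complex.add_re, Complex.sub_re, Complex.re_ofReal_mul, e1, e2, e3, htdef]
    ring
  have hyx : b ^ β ≤ a ^ β := Real.rpow_le_rpow hb0 h hβ.le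
  have hyb : 0 ≤ b ^ β := Real.rpow_nonneg hb0 _
  -- key quadratic inequality
  have hkey : (1 / 2) * a ^ β * d ^ 2
      ≤ a ^ β * a ^ 2 + b ^ β * b ^ 2 - (a ^ β + b ^ β) * t := by
    rw [hd2]
    nlinarith [mul_nonneg (sub_nonneg.2 hyx) (sub_nonneg.2 h),
      mul_nonneg hyb (sub_nonneg.2 h), sq_nonneg (a - b),
      mul_nonneg (sub_nonneg.2 hyx) (sub_nonneg.2 ht)]
  have habs : a ^ β * a ^ 2 + b ^ β * b ^ 2 - (a ^ β + b ^ β) * t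
      ≤ ‖((a ^ β : ℝ) : ℂ) * z₁ - ((b ^ β : ℝ) : ℂ) * z₂‖ * d := by
    rw [← hre]
    calc ((((a ^ β : ℝ) : ℂ) * z₁ - ((b ^ β : ℝ) : ℂ) * z₂) * (starRingEnd ℂ) (z₁ - z₂)).re
        ≤ ‖(((a ^ β : ℝ) : ℂ) * z₁ - ((b ^ β : ℝ) : ℂ) * z₂)
            * (starRingEnd ℂ) (z₁ - z₂)‖ := Complex.re_le_norm _
      _ = ‖((a ^ β : ℝ) : ℂ) * z₁ - ((b ^ β : ℝ) : ℂ) * z₂‖ * d := by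
          rw [norm_mul, Complex.norm_conj]
  have := hkey.trans habs
  have hfinal : (1 / 2) * a ^ β * d * d
      ≤ ‖((a ^ β : ℝ) : ℂ) * z₁ - ((b ^ β : ℝ) : ℂ) * z₂‖ * d := by
    nlinarith [this]
  exact le_of_mul_le_mul_right hfinal hd

/-- Core (WLOG) version of the main theorem. -/
lemma key_aux (α : ℝ) (hα : 0 < α) (z₁ z₂ : ℂ) (h : ‖z₂‖ ≤ ‖z₁‖) :
    ‖((‖z₁‖ ^ α : ℝ) : ℂ) * z₁
        - ((‖z₂‖ ^ α : ℝ) : ℂ) * z₂‖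
      ≤ (2 * (α + 1)) * (‖((‖z₁‖ ^ (α + 1) : ℝ) : ℂ) * z₁
          - ((‖z₂‖ ^ (α + 1) : ℝ) : ℂ) * z₂‖)
            ^ ((α + 1) / (α + 2)) := by
  by_cases hne : z₁ = z₂
  · subst hne
    simp only [sub_self, norm_zero]
    positivity
  have ha0 : 0 < ‖z₁‖ := by
    rcases (norm_nonneg z₁).lt_or_eq with h' | h'
    · exact h'
    · exfalso
      have hz1 : z₁ = 0 := by
        rwa [eq_comm, norm_eq_zero] at h'
      have hz2 : z₂ = 0 := by
        have : ‖z₂‖ ≤ 0 := by rw [← h'] at h; exact h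
        exact norm_eq_zero.1 (le_antisymm this (norm_nonneg _))
      exact hne (hz1.trans hz2.symm)
  set a := ‖z₁‖ with ha
  set d := ‖z₁ - z₂‖ with hdd
  have hd : 0 < d := by
    rw [hdd, norm_pos_iff]
    exact sub_ne_zero.2 hne
  set θ := (α + 1) / (α + 2) with hθdef
  have hθ : 0 < θ := by positivity
  have hθ1 : θ < 1 := by
    rw [hθdef, div_lt_one (by linarith)]; linarith
  have hup := upper_aux hα z₁ z₂ h
  have hlo := lower_aux (by linarith : (0:ℝ) < α + 1) z₁ z₂ h hne
  set R := ‖((‖z₁‖ ^ (α + 1) : ℝ) : ℂ) * z₁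
      - ((‖z₂‖ ^ (α + 1) : ℝ) : ℂ) * z₂‖ with hRdef
  -- d ≤ 2 a
  have hd2a : d ≤ 2 * a := by
    calc d ≤ ‖z₁‖ + ‖z₂‖ := norm_sub_le z₁ z₂
      _ ≤ 2 * a := by rw [← ha]; linarith
  -- middle claim
  have hmid : (1 + α) * a ^ α * d ≤ (2 * (α + 1)) * ((1 / 2) * a ^ (α + 1) * d) ^ θ := by
    have hbase : (0:ℝ) < (1 / 2) * a ^ (α + 1) * d := by positivity
    have e1 : ((1 / 2) * a ^ (α + 1) * d) ^ θ
        = (1 / 2 : ℝ) ^ θ * (a ^ (α + 1)) ^ θ * d ^ θ := by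
      rw [Real.mul_rpow (by positivity) hd.le, Real.mul_rpow (by positivity) (by positivity)]
    have e2 : (a ^ (α + 1) : ℝ) ^ θ = a ^ ((α + 1) * θ) := by
      rw [← Real.rpow_mul ha0.le]
    have e3 : (α + 1) * θ = α + (1 - θ) := by
      rw [hθdef]; field_simp; ring
    have e4 : d = d ^ θ * d ^ (1 - θ) := by
      have hθs : θ + (1 - θ) = 1 := by ring
      rw [← Real.rpow_add hd, hθs, Real.rpow_one]
    have e5 : d ^ (1 - θ) ≤ (2 * a) ^ (1 - θ) :=
      Real.rpow_le_rpow hd.le hd2a (by linarith)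
    have e6 : ((2 : ℝ) * a) ^ (1 - θ) = 2 ^ (1 - θ) * a ^ (1 - θ) :=
      Real.mul_rpow (by norm_num) ha0.le
    have e7 : (1 / 2 : ℝ) ^ θ = 2 ^ (-θ) := by
      rw [Real.rpow_neg (by norm_num : (0:ℝ) ≤ 2), ← Real.inv_rpow (by norm_num : (0:ℝ) ≤ 2)]
      norm_num
    have e8 : (2:ℝ) * 2 ^ (-θ) = 2 ^ (1 - θ) := by
      rw [Real.rpow_sub (by norm_num), Real.rpow_one, Real.rpow_neg (by norm_num)]
      ring
    calc (1 + α) * a ^ α * d = (1 + α) * a ^ α * (d ^ θ * d ^ (1 - θ)) := by rw [← e4]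
      _ ≤ (1 + α) * a ^ α * (d ^ θ * (2 ^ (1 - θ) * a ^ (1 - θ))) := by
          rw [← e6]
          have h1 : (0:ℝ) ≤ (1 + α) * a ^ α := by positivity
          have h2 : (0:ℝ) ≤ d ^ θ := Real.rpow_nonneg hd.le _
          exact mul_le_mul_of_nonneg_left (mul_le_mul_of_nonneg_left e5 h2) h1
      _ = (2 * (α + 1)) * ((1 / 2 : ℝ) ^ θ * (a ^ α * a ^ (1 - θ)) * d ^ θ) := by
          rw [e7]
          have hfact : (1 + α) * (2:ℝ) ^ (1 - θ) = (2 * (α + 1)) * 2 ^ (-θ) := by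
            rw [← e8]; ring
          linear_combination (a ^ α * a ^ (1 - θ) * d ^ θ) * hfact
      _ = (2 * (α + 1)) * ((1 / 2) * a ^ (α + 1) * d) ^ θ := by
          rw [e1, e2, e3, ← Real.rpow_add ha0]
  -- conclude
  have hRθ : ((1 / 2) * a ^ (α + 1) * d) ^ θ ≤ R ^ θ :=
    Real.rpow_le_rpow (by positivity) hlo hθ.le
  calc ‖((‖z₁‖ ^ α : ℝ) : ℂ) * z₁
        - ((‖z₂‖ ^ α : ℝ) : ℂ) * z₂‖
      ≤ (1 + α) * a ^ α * d := hup
    _ ≤ (2 * (α + 1)) * ((1 / 2) * a ^ (α + 1) * d) ^ θ := hmid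
    _ ≤ (2 * (α + 1)) * R ^ θ := by
        have : (0:ℝ) ≤ 2 * (α + 1) := by linarith
        exact mul_le_mul_of_nonneg_left hRθ this

theorem stmt_18 (α : ℝ) (hα : 0 < α) :
    ∃ C : ℝ, 0 < C ∧ ∀ z₁ z₂ : ℂ,
      ‖((‖z₁‖ ^ α : ℝ) : ℂ) * z₁
          - ((‖z₂‖ ^ α : ℝ) : ℂ) * z₂‖
        ≤ C * (‖((‖z₁‖ ^ (α + 1) : ℝ) : ℂ) * z₁
            - ((‖z₂‖ ^ (α + 1) : ℝ) : ℂ) * z₂‖)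
              ^ ((α + 1) / (α + 2)) := by
  refine ⟨2 * (α + 1), by linarith, fun z₁ z₂ => ?_⟩
  rcases le_total (‖z₂‖) (‖z₁‖) with h | h
  · exact key_aux α hα z₁ z₂ h
  · have := key_aux α hα z₂ z₁ h
    have e1 : ‖((‖z₁‖ ^ α : ℝ) : ℂ) * z₁
          - ((‖z₂‖ ^ α : ℝ) : ℂ) * z₂‖
        = ‖((‖z₂‖ ^ α : ℝ) : ℂ) * z₂
          - ((‖z₁‖ ^ α : ℝ) : ℂ) * z₁‖ := by
      rw [← norm_neg]; ring_nf
    have e2 : ‖((‖z₁‖ ^ (α + 1) : ℝ) : ℂ) * z₁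
          - ((‖z₂‖ ^ (α + 1) : ℝ) : ℂ) * z₂‖
        = ‖((‖z₂‖ ^ (α + 1) : ℝ) : ℂ) * z₂
          - ((‖z₁‖ ^ (α + 1) : ℝ) : ℂ) * z₁‖ := by
      rw [← norm_neg]; ring_nf
    rw [e1, e2]
    exact this
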